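/- Let π₂ be a policy minimizing Ψ_α^2 over all policies. Then for every real λ ≥ 2 and every policy q: Ψ_α^λ(π₂) ≤ 2^{λ−2} · Ψ_α^λ(q). In other words, the minimizer of the squared marginal information ratio simultaneously minimizes every (α,λ)-marginal information ratio with λ ≥ 2, up to the factor 2^{λ−2}. -/

import Mathlib

/-- A policy assigns to each context `s` a probability vector over the actions `A`. -/
structure Policy (S A : Type) [Fintype S] [Fintype A] where
  prob : S → A → ℝ
  nonneg : ∀ s a, 0 ≤ prob s a
  sum_eq_one : ∀ s, ∑ a, prob s a = 1

/-- Expected one-step regret of a policy under context distribution `p`. -/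
noncomputable def reg {S A : Type} [Fintype S] [Fintype A]
    (p : S → ℝ) (Δ : S → A → ℝ) (π : Policy S A) : ℝ :=
  ∑ s, p s * ∑ a, Δ s a * π.prob s a

/-- Expected information gain of a policy under context distribution `p`. -/
noncomputable def info {S A : Type} [Fintype S] [Fintype A]
    (p : S → ℝ) (I : S → A → ℝ) (π : Policy S A) : ℝ :=
  ∑ s, p s * ∑ a, I s a * π.prob s a

/-- The `(α, λ)`-marginal information ratio `Ψ_α^λ(π)`. -/
noncomputable def ratio {S A : Type} [Fintype S] [Fintype A]
    (p : S → ℝ) (Δ I : S → A → ℝ) (α lam : ℝ) (π : Policy S A) : ℝ :=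
  (max 0 (reg p Δ π - α)) ^ lam / info p I π

/-!
Write `m = max 0 (reg π₂ - α)`, `n = info π₂` and `M`, `N` for the same quantities of `q`.
Minimality of `Ψ_α^2` at `π₂` against the mixtures `(1 - β) π₂ + β q` gives, to first order in
`β → 0`, the inequality `2 n m (M - m) ≥ m² (N - n) ≥ -m² n`, that is `m ≤ 2 M`. Then
`Ψ_α^λ(π₂) = (m² / n) m^(λ-2) ≤ (M² / N) (2 M)^(λ-2) = 2^(λ-2) Ψ_α^λ(q)`.
-/

open Filter Topology Finset

lemma nonneg_of_forall_add_mul_nonneg {c d : ℝ} (h : ∀ β, 0 < β → β ≤ 1 → 0 ≤ c + β * d) :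
    0 ≤ c := by
  have hlim : Tendsto (fun β => c + β * d) (𝓝[>] 0) (𝓝 c) := by
    have hcont : Continuous fun β : ℝ => c + β * d := by fun_prop
    simpa using (hcont.tendsto 0).mono_left nhdsWithin_le_nhds
  refine ge_of_tendsto hlim ?_
  filter_upwards [Ioc_mem_nhdsGT one_pos] with β hβ using h β hβ.1 hβ.2

lemma le_two_mul_of_forall_sq_div_le {m M n N : ℝ} (hm : 0 ≤ m) (hM : 0 ≤ M) (hn : 0 < n)
    (hN : 0 < N)
    (h : ∀ β, 0 < β → β ≤ 1 → m ^ 2 / n ≤ ((1 - β) * m + β * M) ^ 2 / ((1 - β) * n + β * N)) :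
    m ≤ 2 * M := by
  rcases hm.eq_or_lt with rfl | hm
  · linarith
  have first_order : 0 ≤ 2 * n * m * (M - m) - m ^ 2 * (N - n) := by
    refine nonneg_of_forall_add_mul_nonneg (d := n * (M - m) ^ 2) fun β hβ hβ1 => ?_
    have hden : 0 < (1 - β) * n + β * N := by nlinarith
    have hβmix := h β hβ hβ1
    rw [div_le_div_iff₀ hn hden] at hβmix
    refine nonneg_of_mul_nonneg_right (a := β) ?_ hβ
    linear_combination hβmix
  nlinarith [mul_pos hn hm, mul_nonneg (mul_nonneg hm.le hm.le) hN.le]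

lemma rpow_div_le_two_rpow_mul_of_sq_div_le {m M n N lam : ℝ} (hm : 0 ≤ m) (hN : 0 ≤ N)
    (h2 : m ^ (2 : ℝ) / n ≤ M ^ (2 : ℝ) / N) (hmM : m ≤ 2 * M) (hlam : 2 ≤ lam) :
    m ^ lam / n ≤ 2 ^ (lam - 2) * (M ^ lam / N) := by
  have hM : 0 ≤ M := by linarith
  have split : ∀ x : ℝ, 0 ≤ x → x ^ lam = x ^ (2 : ℝ) * x ^ (lam - 2) := fun x hx => by
    rw [← Real.rpow_add' hx (by linarith)]
    ring_nf
  calc m ^ lam / n = m ^ (2 : ℝ) / n * m ^ (lam - 2) := by rw [split m hm]; ring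
    _ ≤ M ^ (2 : ℝ) / N * (2 * M) ^ (lam - 2) := by gcongr
    _ = 2 ^ (lam - 2) * (M ^ lam / N) := by rw [Real.mul_rpow zero_le_two hM, split M hM]; ring

namespace Policy

variable {S A : Type} [Fintype S] [Fintype A]

def mix (π q : Policy S A) (β : ℝ) (hβ0 : 0 ≤ β) (hβ1 : β ≤ 1) : Policy S A where
  prob s a := (1 - β) * π.prob s a + β * q.prob s a
  nonneg s a := add_nonneg (mul_nonneg (sub_nonneg.2 hβ1) (π.nonneg s a))
    (mul_nonneg hβ0 (q.nonneg s a))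
  sum_eq_one s := by
    rw [sum_add_distrib, ← mul_sum, ← mul_sum, π.sum_eq_one s, q.sum_eq_one s]
    ring

lemma sum_mul_sum_mul_mix (p : S → ℝ) (f : S → A → ℝ) (π q : Policy S A) (β : ℝ)
    (hβ0 : 0 ≤ β) (hβ1 : β ≤ 1) :
    ∑ s, p s * ∑ a, f s a * (π.mix q β hβ0 hβ1).prob s a
      = (1 - β) * ∑ s, p s * ∑ a, f s a * π.prob s a
        + β * ∑ s, p s * ∑ a, f s a * q.prob s a := by
  simp only [mix, mul_sum, ← sum_add_distrib]
  exact sum_congr rfl fun s _ => sum_congr rfl fun a _ => by ring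

lemma sum_mul_prob_pos (π : Policy S A) {f : A → ℝ} (hf : ∀ a, 0 < f a) (s : S) :
    0 < ∑ a, f a * π.prob s a := by
  obtain ⟨a, -, ha⟩ : ∃ a ∈ univ, (0 : ℝ) < π.prob s a :=
    exists_lt_of_sum_lt (by simp [π.sum_eq_one s])
  exact sum_pos' (fun a _ => mul_nonneg (hf a).le (π.nonneg s a))
    ⟨a, mem_univ a, mul_pos (hf a) ha⟩

end Policy

section Ratio

variable {S A : Type} [Fintype S] [Fintype A]

lemma reg_mix (p : S → ℝ) (Δ : S → A → ℝ) (π q : Policy S A) (β : ℝ) (hβ0 : 0 ≤ β)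
    (hβ1 : β ≤ 1) :
    reg p Δ (π.mix q β hβ0 hβ1) = (1 - β) * reg p Δ π + β * reg p Δ q :=
  Policy.sum_mul_sum_mul_mix p Δ π q β hβ0 hβ1

lemma info_mix (p : S → ℝ) (I : S → A → ℝ) (π q : Policy S A) (β : ℝ) (hβ0 : 0 ≤ β)
    (hβ1 : β ≤ 1) :
    info p I (π.mix q β hβ0 hβ1) = (1 - β) * info p I π + β * info p I q :=
  Policy.sum_mul_sum_mul_mix p I π q β hβ0 hβ1

lemma info_pos {p : S → ℝ} (hp0 : ∀ s, 0 ≤ p s) (hpex : ∃ s, 0 < p s) {I : S → A → ℝ}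
    (hI : ∀ s a, 0 < I s a) (π : Policy S A) : 0 < info p I π := by
  obtain ⟨s, hs⟩ := hpex
  exact sum_pos' (fun s _ => mul_nonneg (hp0 s) (π.sum_mul_prob_pos (hI s) s).le)
    ⟨s, mem_univ s, mul_pos hs (π.sum_mul_prob_pos (hI s) s)⟩

lemma max_zero_reg_mix_sub_le (p : S → ℝ) (Δ : S → A → ℝ) (α : ℝ) (π q : Policy S A) (β : ℝ)
    (hβ0 : 0 ≤ β) (hβ1 : β ≤ 1) :
    max 0 (reg p Δ (π.mix q β hβ0 hβ1) - α)
      ≤ (1 - β) * max 0 (reg p Δ π - α) + β * max 0 (reg p Δ q - α) := by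
  have hβ1' : 0 ≤ 1 - β := sub_nonneg.2 hβ1
  refine max_le (by positivity) ?_
  rw [reg_mix]
  calc (1 - β) * reg p Δ π + β * reg p Δ q - α
      = (1 - β) * (reg p Δ π - α) + β * (reg p Δ q - α) := by ring
    _ ≤ (1 - β) * max 0 (reg p Δ π - α) + β * max 0 (reg p Δ q - α) := by
      gcongr <;> exact le_max_right _ _

lemma max_zero_reg_sub_le_two_mul_of_forall_ratio_two_le {p : S → ℝ} (hp0 : ∀ s, 0 ≤ p s)
    (hpex : ∃ s, 0 < p s) {Δ I : S → A → ℝ} (hI : ∀ s a, 0 < I s a) {α : ℝ} {π₂ : Policy S A}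
    (hmin : ∀ q : Policy S A, ratio p Δ I α 2 π₂ ≤ ratio p Δ I α 2 q) (q : Policy S A) :
    max 0 (reg p Δ π₂ - α) ≤ 2 * max 0 (reg p Δ q - α) := by
  refine le_two_mul_of_forall_sq_div_le (le_max_left _ _) (le_max_left _ _)
    (info_pos hp0 hpex hI π₂) (info_pos hp0 hpex hI q) fun β hβ hβ1 => ?_
  have hmix := hmin (π₂.mix q β hβ.le hβ1)
  have hden := info_pos hp0 hpex hI (π₂.mix q β hβ.le hβ1)
  simp only [ratio, Real.rpow_two, info_mix] at hmix hden
  refine hmix.trans ?_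
  gcongr
  exact max_zero_reg_mix_sub_le p Δ α π₂ q β hβ.le hβ1

end Ratio

theorem stmt_2_general {S A : Type} [Fintype S] [Fintype A]
    (p : S → ℝ) (hp0 : ∀ s, 0 ≤ p s) (hpex : ∃ s, 0 < p s)
    (Δ I : S → A → ℝ) (hI : ∀ s a, 0 < I s a)
    (α : ℝ)
    (π₂ : Policy S A)
    (hmin : ∀ q : Policy S A, ratio p Δ I α 2 π₂ ≤ ratio p Δ I α 2 q) :
    ∀ lam : ℝ, 2 ≤ lam → ∀ q : Policy S A,
      ratio p Δ I α lam π₂ ≤ 2 ^ (lam - 2) * ratio p Δ I α lam q := by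
  intro lam hlam q
  exact rpow_div_le_two_rpow_mul_of_sq_div_le (le_max_left _ _) (info_pos hp0 hpex hI q).le
    (hmin q) (max_zero_reg_sub_le_two_mul_of_forall_ratio_two_le hp0 hpex hI hmin q) hlam

/-- Adaptivity of the squared-ratio minimizer (core of Theorem 3.1): a minimizer `π₂`
of `Ψ_α^2` minimizes every `(α, λ)`-marginal information ratio with `λ ≥ 2` up to a
factor `2^(λ-2)`: for every policy `q`, `Ψ_α^λ(π₂) ≤ 2^(λ-2) · Ψ_α^λ(q)`. -/
theorem stmt_2 {S A : Type} [Fintype S] [Fintype A] [Nonempty S] [Nonempty A]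
    (p : S → ℝ) (hp0 : ∀ s, 0 ≤ p s) (hp1 : ∑ s, p s = 1) (hpex : ∃ s, 0 < p s)
    (Δ I : S → A → ℝ) (hΔ : ∀ s a, 0 ≤ Δ s a) (hI : ∀ s a, 0 < I s a)
    (α : ℝ) (hα : 0 ≤ α)
    (π₂ : Policy S A)
    (hmin : ∀ q : Policy S A, ratio p Δ I α 2 π₂ ≤ ratio p Δ I α 2 q) :
    ∀ lam : ℝ, 2 ≤ lam → ∀ q : Policy S A,
      ratio p Δ I α lam π₂ ≤ 2 ^ (lam - 2) * ratio p Δ I α lam q :=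
  stmt_2_general p hp0 hpex Δ I hI α π₂ hmin
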